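/- arXiv:0909.0717 — 5 statements merged into one kernel-verified Lean document; each statement's English description precedes it below -/
import Mathlib

section
/- Let X be a nonempty finite set and R a family of subsets of X. Let ν > 0 and 0 < α < 1/4. If a nonempty subset Z ⊆ X is a (ν,α)-sample for (X,R), then Z is a relative (ν,4α)-approximation for (X,R). -/
/-- The measure of a range `r` in a finite set `Z`: `|Z ∩ r| / |Z|`. -/
noncomputable def meas {γ : Type*} (r : Set γ) (Z : Finset γ) : ℝ :=
  (((↑Z : Set γ) ∩ r).ncard : ℝ) / (Z.card : ℝ)

/-- The distance `d_ν(a,b) = |a − b| / (a + b + ν)`. -/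
noncomputable def dnu (ν a b : ℝ) : ℝ := |a - b| / (a + b + ν)

/-!
If `d_ν(a, b) < α` then `|a - b| < α (a + b + ν)`. When `b ≥ ν`, the right-hand side is at most
`α (a + 2b)`, a bound on `a - b` relative to `b`; when `b ≤ ν` it is at most
`α (a + 2ν)`, an additive error. In both cases `a` itself appears on the right once `a > b`,
and solving for `a - b` costs a factor `1 / (1 - α)`, which `α ≤ 1/4` keeps below `4/3`.
-/

lemma meas_nonneg {γ : Type*} (r : Set γ) (Z : Finset γ) : 0 ≤ meas r Z := by
  unfold meas
  positivity

section DnuBounds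

variable {ν a b α : ℝ}

lemma dnu_nonneg (ha : 0 ≤ a) (hb : 0 ≤ b) (hν : 0 < ν) : 0 ≤ dnu ν a b := by
  unfold dnu
  positivity

lemma abs_sub_lt_of_dnu_lt (ha : 0 ≤ a) (hb : 0 ≤ b) (hν : 0 < ν) (h : dnu ν a b < α) :
    |a - b| < α * (a + b + ν) := by
  rwa [dnu, div_lt_iff₀ (by linarith)] at h

lemma mul_le_of_dnu_lt (ha : 0 ≤ a) (hb : 0 ≤ b) (hν : 0 < ν) (h : dnu ν a b < α)
    (hνb : ν ≤ b) : (1 - 4 * α) * b ≤ a := by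
  have hab := abs_sub_lt_of_dnu_lt ha hb hν h
  have hα : 0 < α := (dnu_nonneg ha hb hν).trans_lt h
  have hlow := (abs_sub_lt_iff.mp hab).2
  by_contra! hlt
  nlinarith [mul_nonneg hα.le (sub_nonneg.2 hνb), mul_nonneg hα.le hb,
    mul_pos hα (show 0 < b - a by nlinarith)]

lemma le_mul_of_dnu_lt (ha : 0 ≤ a) (hb : 0 ≤ b) (hν : 0 < ν) (hα : α ≤ 1 / 4)
    (h : dnu ν a b < α) (hνb : ν ≤ b) : a ≤ (1 + 4 * α) * b := by
  have hab := abs_sub_lt_of_dnu_lt ha hb hν h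
  have hα0 : 0 < α := (dnu_nonneg ha hb hν).trans_lt h
  have hup := (abs_sub_lt_iff.mp hab).1
  by_contra! hlt
  nlinarith [mul_nonneg hα0.le (sub_nonneg.2 hνb),
    mul_nonneg (mul_nonneg hα0.le (show 0 ≤ 1 - 4 * α by linarith)) hb,
    mul_pos (show 0 < 1 - α by linarith) (sub_pos.2 hlt)]

lemma abs_sub_le_of_dnu_lt (ha : 0 ≤ a) (hb : 0 ≤ b) (hν : 0 < ν) (hα : α ≤ 1 / 4)
    (h : dnu ν a b < α) (hbν : b ≤ ν) : |a - b| ≤ 4 * α * ν := by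
  have hab := abs_sub_lt_of_dnu_lt ha hb hν h
  have hα0 : 0 < α := (dnu_nonneg ha hb hν).trans_lt h
  obtain ⟨hup, hlow⟩ := abs_sub_lt_iff.mp hab
  rw [abs_sub_le_iff]
  constructor <;> nlinarith

end DnuBounds

theorem sample_to_relative_approx_general {γ : Type*} (X : Finset γ)
    (R : Set (Set γ)) (ν α : ℝ) (hν : 0 < ν) (hα : α < 1 / 4)
    (Z : Finset γ)
    (hsample : ∀ r ∈ R, dnu ν (meas r Z) (meas r X) < α) :
    ∀ r ∈ R,
      (ν ≤ meas r X →
        (1 - 4 * α) * meas r X ≤ meas r Z ∧ meas r Z ≤ (1 + 4 * α) * meas r X) ∧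
      (meas r X ≤ ν → |meas r Z - meas r X| ≤ (4 * α) * ν) := by
  intro r hr
  have hZ := meas_nonneg r Z
  have hX := meas_nonneg r X
  have h := hsample r hr
  exact ⟨fun hνX => ⟨mul_le_of_dnu_lt hZ hX hν h hνX, le_mul_of_dnu_lt hZ hX hν hα.le h hνX⟩,
    abs_sub_le_of_dnu_lt hZ hX hν hα.le h⟩

/-- If a nonempty `Z ⊆ X` is a `(ν,α)`-sample for `(X,R)` with `ν > 0` and
`0 < α < 1/4`, then `Z` is a relative `(ν,4α)`-approximation for `(X,R)`. -/
theorem sample_to_relative_approx {γ : Type*} (X : Finset γ) (hX : X.Nonempty)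
    (R : Set (Set γ)) (ν α : ℝ) (hν : 0 < ν) (hα0 : 0 < α) (hα : α < 1 / 4)
    (Z : Finset γ) (hZX : Z ⊆ X) (hZ : Z.Nonempty)
    (hsample : ∀ r ∈ R, dnu ν (meas r Z) (meas r X) < α) :
    ∀ r ∈ R,
      (ν ≤ meas r X →
        (1 - 4 * α) * meas r X ≤ meas r Z ∧ meas r Z ≤ (1 + 4 * α) * meas r X) ∧
      (meas r X ≤ ν → |meas r Z - meas r X| ≤ (4 * α) * ν) :=
  sample_to_relative_approx_general X R ν α hν hα Z hsample
end

section
/- Let X be a nonempty finite set and R a family of subsets of X. Let ν > 0 and 0 < α < 1. If a nonempty subset Z ⊆ X is a relative (ν,α)-approximation for (X,R), then Z is a (ν,α)-sample for (X,R). -/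
lemma abs_sub_le_mul_max_of_relative {ν α a b : ℝ}
    (hlarge : ν ≤ b → (1 - α) * b ≤ a ∧ a ≤ (1 + α) * b)
    (hsmall : b ≤ ν → |a - b| ≤ α * ν) :
    |a - b| ≤ α * max b ν := by
  rcases le_total ν b with hνb | hbν
  · obtain ⟨hlo, hhi⟩ := hlarge hνb
    rw [max_eq_left hνb, abs_sub_le_iff]
    constructor <;> linarith
  · rw [max_eq_right hbν]
    exact hsmall hbν

lemma dnu_lt_of_abs_sub_le_mul_max {ν α a b : ℝ} (hν : 0 < ν) (hα : 0 < α)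
    (ha : 0 ≤ a) (hb : 0 ≤ b) (h : |a - b| ≤ α * max b ν) :
    dnu ν a b < α := by
  rw [dnu, div_lt_iff₀ (by linarith)]
  rcases eq_or_lt_of_le (add_nonneg ha (le_min hb hν.le)) with hzero | hpos
  · have ha0 : a = 0 := by linarith [le_min hb hν.le]
    have hb0 : b = 0 := by
      rcases min_choice b ν with hmin | hmin <;> linarith
    subst ha0 hb0
    simpa using mul_pos hα hν
  · have hmax : max b ν < a + b + ν := by linarith [max_add_min b ν]
    calc |a - b| ≤ α * max b ν := h
      _ < α * (a + b + ν) := mul_lt_mul_of_pos_left hmax hα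

theorem relative_approx_to_sample_general {γ : Type*} (X : Finset γ)
    (R : Set (Set γ)) (ν α : ℝ) (hν : 0 < ν) (hα0 : 0 < α)
    (Z : Finset γ)
    (hrel : ∀ r ∈ R,
      (ν ≤ meas r X →
        (1 - α) * meas r X ≤ meas r Z ∧ meas r Z ≤ (1 + α) * meas r X) ∧
      (meas r X ≤ ν → |meas r Z - meas r X| ≤ α * ν)) :
    ∀ r ∈ R, dnu ν (meas r Z) (meas r X) < α := by
  intro r hr
  obtain ⟨hlarge, hsmall⟩ := hrel r hr
  exact dnu_lt_of_abs_sub_le_mul_max hν hα0 (meas_nonneg r Z) (meas_nonneg r X)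
    (abs_sub_le_mul_max_of_relative hlarge hsmall)

/-- If a nonempty `Z ⊆ X` is a relative `(ν,α)`-approximation for `(X,R)` with
`ν > 0` and `0 < α < 1`, then `Z` is a `(ν,α)`-sample for `(X,R)`. -/
theorem relative_approx_to_sample {γ : Type*} (X : Finset γ) (hX : X.Nonempty)
    (R : Set (Set γ)) (ν α : ℝ) (hν : 0 < ν) (hα0 : 0 < α) (hα : α < 1)
    (Z : Finset γ) (hZX : Z ⊆ X) (hZ : Z.Nonempty)
    (hrel : ∀ r ∈ R,
      (ν ≤ meas r X →
        (1 - α) * meas r X ≤ meas r Z ∧ meas r Z ≤ (1 + α) * meas r X) ∧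
      (meas r X ≤ ν → |meas r Z - meas r X| ≤ α * ν)) :
    ∀ r ∈ R, dnu ν (meas r Z) (meas r X) < α :=
  relative_approx_to_sample_general X R ν α hν hα0 Z hrel
end

section
/- Let X be a nonempty finite set and R a family of subsets of X, and let 0 < ε < 1. Set M = ⌈400/ε²⌉ and, for each integer i with 1 ≤ i ≤ M, set ν_i = i·ε²/400 and α_i = 1/(2√i). If a nonempty subset Z ⊆ X is a (ν_i, α_i)-sample for (X,R) for every i ∈ {1, …, M}, then Z is a sensitive ε-approximation for (X,R); that is, |X̄(r,Z) − X̄(r,X)| ≤ (ε/2)·(X̄(r,X)^{1/2} + ε) for every r ∈ R. -/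
lemma meas_le_one {γ : Type*} (r : Set γ) (Z : Finset γ) : meas r Z ≤ 1 := by
  refine div_le_one_of_le₀ ?_ (Nat.cast_nonneg _)
  have h := Set.ncard_le_ncard (Set.inter_subset_left (t := r)) Z.finite_toSet
  rw [Set.ncard_coe_finset] at h
  exact_mod_cast h

lemma abs_sub_mul_one_sub_lt_of_dnu_lt {ν a b α : ℝ} (ha : 0 ≤ a) (hb : 0 ≤ b) (hν : 0 < ν)
    (h : dnu ν a b < α) : |a - b| * (1 - α) < α * (2 * b + ν) := by
  have hpos : 0 < a + b + ν := by positivity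
  have hα : 0 ≤ α := ((div_nonneg (abs_nonneg _) hpos.le).trans_lt h).le
  rw [dnu, div_lt_iff₀ hpos] at h
  have ha_le : a ≤ b + |a - b| := by linarith [le_abs_self (a - b)]
  linarith [mul_le_mul_of_nonneg_left ha_le hα]

lemma exists_nat_mul_mem_Icc_of_le_one {b c : ℝ} (hb0 : 0 ≤ b) (hb1 : b ≤ 1) (hc : 0 < c) :
    ∃ i : ℕ, 1 ≤ i ∧ i ≤ ⌈1 / c⌉₊ ∧ b ≤ i * c ∧ i * c ≤ b + c := by
  refine ⟨max 1 ⌈b / c⌉₊, le_max_left _ _, ?_, ?_, ?_⟩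
  · exact max_le (Nat.one_le_ceil_iff.mpr (by positivity))
      (Nat.ceil_mono (div_le_div_of_nonneg_right hb1 hc.le))
  · rw [← div_le_iff₀ hc]
    exact (Nat.le_ceil _).trans (by exact_mod_cast le_max_right _ _)
  · have hi : ((max 1 ⌈b / c⌉₊ : ℕ) : ℝ) ≤ b / c + 1 := by
      push_cast
      exact max_le (by linarith [div_nonneg hb0 hc.le])
        (Nat.ceil_lt_add_one (div_nonneg hb0 hc.le)).le
    calc ((max 1 ⌈b / c⌉₊ : ℕ) : ℝ) * c ≤ (b / c + 1) * c := by gcongr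
      _ = b + c := by field_simp

lemma lt_of_mul_two_mul_sub_one_lt {t u s ε : ℝ} (ht : 0 ≤ t) (hu : 0 ≤ u) (hs : 1 ≤ s)
    (hus : 20 * u ≤ s * ε) (h : t * (2 * s - 1) < 3 * u ^ 2 + ε ^ 2 / 400) :
    t < 3 * u * ε / 20 + ε ^ 2 / 400 := by
  have hts : t * s ≤ t * (2 * s - 1) := by nlinarith
  have hbound : 3 * u ^ 2 + ε ^ 2 / 400 ≤ s * (3 * u * ε / 20 + ε ^ 2 / 400) := by
    nlinarith [mul_le_mul_of_nonneg_left hus hu, sq_nonneg ε]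
  have : t * s < (3 * u * ε / 20 + ε ^ 2 / 400) * s := by linarith
  exact lt_of_mul_lt_mul_right this (by linarith)

theorem samples_to_sensitive_approx_general {γ : Type*} (X : Finset γ)
    (R : Set (Set γ)) (ε : ℝ) (hε0 : 0 < ε)
    (Z : Finset γ)
    (hsample : ∀ i : ℕ, 1 ≤ i → i ≤ ⌈(400 : ℝ) / ε ^ 2⌉₊ →
      ∀ r ∈ R, dnu ((i : ℝ) * ε ^ 2 / 400) (meas r Z) (meas r X) <
        1 / (2 * Real.sqrt i)) :
    ∀ r ∈ R, |meas r Z - meas r X| ≤ (ε / 2) * (Real.sqrt (meas r X) + ε) := by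
  intro r hr
  have hb := meas_nonneg r X
  obtain ⟨i, hi1, hiM, hbν, hνb⟩ :=
    exists_nat_mul_mem_Icc_of_le_one hb (meas_le_one r X) (by positivity : 0 < ε ^ 2 / 400)
  rw [one_div_div] at hiM
  rw [← mul_div_assoc] at hbν hνb
  have hdist := abs_sub_mul_one_sub_lt_of_dnu_lt (meas_nonneg r Z) hb (by positivity)
    (hsample i hi1 hiM r hr)
  set b := meas r X
  set s := Real.sqrt i
  have hs1 : 1 ≤ s := Real.one_le_sqrt.mpr (by exact_mod_cast hi1)
  have hsq : (i : ℝ) = s ^ 2 := (Real.sq_sqrt (Nat.cast_nonneg i)).symm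
  have hdist' : |meas r Z - b| * (2 * s - 1) < 3 * Real.sqrt b ^ 2 + ε ^ 2 / 400 := by
    rw [Real.sq_sqrt hb]
    field_simp at hdist
    linarith
  have hus : 20 * Real.sqrt b ≤ s * ε := by
    have : Real.sqrt b ≤ s * ε / 20 :=
      Real.sqrt_le_iff.mpr ⟨by positivity, by rw [div_pow, mul_pow, ← hsq]; linarith⟩
    linarith
  have := lt_of_mul_two_mul_sub_one_lt (abs_nonneg _) (Real.sqrt_nonneg b) hs1 hus hdist'
  nlinarith [mul_nonneg (Real.sqrt_nonneg b) hε0.le]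

/-- If a nonempty `Z ⊆ X` is a `(ν_i,α_i)`-sample for `(X,R)` for every
`1 ≤ i ≤ M = ⌈400/ε²⌉`, where `ν_i = i·ε²/400` and `α_i = 1/(2√i)`, then `Z`
is a sensitive `ε`-approximation for `(X,R)`. -/
theorem samples_to_sensitive_approx {γ : Type*} (X : Finset γ) (hX : X.Nonempty)
    (R : Set (Set γ)) (ε : ℝ) (hε0 : 0 < ε) (hε1 : ε < 1)
    (Z : Finset γ) (hZX : Z ⊆ X) (hZ : Z.Nonempty)
    (hsample : ∀ i : ℕ, 1 ≤ i → i ≤ ⌈(400 : ℝ) / ε ^ 2⌉₊ →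
      ∀ r ∈ R, dnu ((i : ℝ) * ε ^ 2 / 400) (meas r Z) (meas r X) <
        1 / (2 * Real.sqrt i)) :
    ∀ r ∈ R, |meas r Z - meas r X| ≤ (ε / 2) * (Real.sqrt (meas r X) + ε) :=
  samples_to_sensitive_approx_general X R ε hε0 Z hsample
end

section
/- Let X be a nonempty finite set and R a family of subsets of X. Let 0 < ε < 1 and 0 < p < 1 be given parameters, and set ε' = ε·√p. If a nonempty subset Z ⊆ X is a sensitive ε'-approximation for (X,R), then Z is a relative (p,ε)-approximation for (X,R). -/
/-- If a nonempty `Z ⊆ X` is a sensitive `ε'`-approximation for `(X,R)`,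
where `ε' = ε·√p`, then `Z` is a relative `(p,ε)`-approximation for `(X,R)`. -/
theorem sensitive_to_relative_approx {γ : Type*} (X : Finset γ) (hX : X.Nonempty)
    (R : Set (Set γ)) (ε p : ℝ) (hε0 : 0 < ε) (hε1 : ε < 1)
    (hp0 : 0 < p) (hp1 : p < 1)
    (Z : Finset γ) (hZX : Z ⊆ X) (hZ : Z.Nonempty)
    (hsens : ∀ r ∈ R, |meas r Z - meas r X| ≤
      (ε * Real.sqrt p / 2) * (Real.sqrt (meas r X) + ε * Real.sqrt p)) :
    ∀ r ∈ R,
      (p ≤ meas r X →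
        (1 - ε) * meas r X ≤ meas r Z ∧ meas r Z ≤ (1 + ε) * meas r X) ∧
      (meas r X ≤ p → |meas r Z - meas r X| ≤ ε * p) := by
  intro r hr
  have h := hsens r hr
  have hm0 : 0 ≤ meas r X := by
    unfold meas; positivity
  have hsqm := Real.sq_sqrt hm0
  have hsqp := Real.sq_sqrt hp0.le
  have hnnp := Real.sqrt_nonneg p
  have hnnm := Real.sqrt_nonneg (meas r X)
  constructor
  · intro hpm
    have hsp : Real.sqrt p ≤ Real.sqrt (meas r X) := Real.sqrt_le_sqrt hpm
    have hbound : (ε * Real.sqrt p / 2) * (Real.sqrt (meas r X) + ε * Real.sqrt p)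
        ≤ ε * meas r X := by
      have h1 : ε * (Real.sqrt p * Real.sqrt (meas r X)) ≤ ε * meas r X := by
        have := mul_le_mul_of_nonneg_right hsp hnnm
        nlinarith
      have h2 : ε ^ 2 * p ≤ ε * meas r X := by
        nlinarith [mul_nonneg (mul_pos hε0 hp0).le (by linarith : (0:ℝ) ≤ 1 - ε),
          mul_le_mul_of_nonneg_left hpm hε0.le]
      nlinarith
    have habs := abs_le.mp (h.trans hbound)
    constructor <;> nlinarith [habs.1, habs.2]
  · intro hpm
    have hsp : Real.sqrt (meas r X) ≤ Real.sqrt p := Real.sqrt_le_sqrt hpm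
    refine h.trans ?_
    have h1 : ε * (Real.sqrt p * Real.sqrt (meas r X)) ≤ ε * p := by
      have := mul_le_mul_of_nonneg_left hsp hnnp
      nlinarith
    have h2 : ε ^ 2 * p ≤ ε * p := by
      nlinarith [mul_nonneg (mul_pos hε0 hp0).le (by linarith : (0:ℝ) ≤ 1 - ε)]
    nlinarith
end

section
/- There is an absolute constant c > 0 with the following property. For every integer m ≥ 2, let n = m² and let P = {(i, j, i² + j²) : i, j ∈ {1, …, m}} ⊆ ℝ³ (the m × m integer grid lifted to the paraboloid z = x² + y²). Then for every integer k with 2 ≤ k ≤ n and every partition of P into parts Q_1, …, Q_u with k ≤ |Q_i| ≤ 2k for every i, there exists an affine plane h in ℝ³ that separates at least c·√(n/k) of the parts Q_1, …, Q_u. -/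
/-!
Use only the `2m` axis-parallel planes `x = i + 1/2` and `y = i + 1/2`. A point of the lifted grid
is determined by its first two coordinates, so a part `Q` with `X` distinct `x`-values and `Y`
distinct `y`-values has `k ≤ |Q| ≤ XY`; the planes strictly between its extreme `x`-values and its
extreme `y`-values all separate it, and there are at least `X + Y - 2 ≥ (2/3)√k` of them. There are
`u ≥ n/(2k)` parts, so double counting the separations gives a plane separating at least
`u · (2/3)√k / (2m) ≥ √(n/k)/6` parts.
-/

open Finset

/-- An affine plane `{x | a·x₁ + b·x₂ + c·x₃ + d = 0}` separates `Q` if each of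
the two open halfspaces it bounds contains a point of `Q`. -/
def PlaneSeparates (a b c d : ℝ) (Q : Finset (ℝ × ℝ × ℝ)) : Prop :=
  (∃ p ∈ Q, 0 < a * p.1 + b * p.2.1 + c * p.2.2 + d) ∧
  (∃ p ∈ Q, a * p.1 + b * p.2.1 + c * p.2.2 + d < 0)

/-- The `m × m` grid lifted to the paraboloid `z = x² + y²`. -/
noncomputable def liftedGrid (m : ℕ) : Finset (ℝ × ℝ × ℝ) :=
  ((Finset.Icc 1 m) ×ˢ (Finset.Icc 1 m)).image
    (fun ij => ((ij.1 : ℝ), (ij.2 : ℝ), (ij.1 : ℝ) ^ 2 + (ij.2 : ℝ) ^ 2))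

theorem Finset.exists_card_mul_le_card_mul_card_bipartiteBelow {R α β : Type*} [Semiring R]
    [LinearOrder R] [IsStrictOrderedRing R] {s : Finset α} {t : Finset β} (r : α → β → Prop)
    [∀ a b, Decidable (r a b)] (ht : t.Nonempty) {x : R}
    (hx : ∀ a ∈ s, x ≤ #(t.bipartiteAbove r a)) :
    ∃ b ∈ t, #s * x ≤ #t * #(s.bipartiteBelow r b) := by
  refine exists_le_of_sum_le ht ?_
  calc ∑ _b ∈ t, (#s * x : R) = #t * (#s • x) := by rw [sum_const, nsmul_eq_mul, nsmul_eq_mul]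
    _ ≤ #t * ∑ a ∈ s, (#(t.bipartiteAbove r a) : R) := by gcongr; exact card_nsmul_le_sum _ _ _ hx
    _ = ∑ b ∈ t, (#t * #(s.bipartiteBelow r b) : R) := by
      rw [← mul_sum]; norm_cast; rw [sum_card_bipartiteAbove_eq_sum_card_bipartiteBelow]

theorem Finset.card_image_sub_one_le_card_filter_straddle {α : Type*} (S : Finset α) (f : α → ℕ)
    {N : ℕ} (hf : ∀ a ∈ S, f a ≤ N) :
    #(S.image f) - 1 ≤ #{i ∈ range N | (∃ a ∈ S, i < f a) ∧ ∃ a ∈ S, f a ≤ i} := by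
  set T := S.image f
  rcases T.eq_empty_or_nonempty with hT | hT
  · simp [hT]
  obtain ⟨a, ha, hfa⟩ := mem_image.1 (T.min'_mem hT)
  obtain ⟨b, hb, hfb⟩ := mem_image.1 (T.max'_mem hT)
  have hT_sub : T ⊆ Icc (T.min' hT) (T.max' hT) := fun y hy =>
    mem_Icc.2 ⟨min'_le _ _ hy, le_max' _ _ hy⟩
  have hcuts : Ico (T.min' hT) (T.max' hT) ⊆
      {i ∈ range N | (∃ a ∈ S, i < f a) ∧ ∃ a ∈ S, f a ≤ i} := by
    intro i hi
    rw [mem_Ico] at hi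
    have := hf b hb
    exact mem_filter.2 ⟨mem_range.2 (by omega), ⟨b, hb, by omega⟩, ⟨a, ha, by omega⟩⟩
  calc #T - 1 ≤ #(Icc (T.min' hT) (T.max' hT)) - 1 := Nat.sub_le_sub_right (card_le_card hT_sub) 1
    _ = #(Ico (T.min' hT) (T.max' hT)) := by simp only [Nat.card_Icc, Nat.card_Ico]; omega
    _ ≤ _ := card_le_card hcuts

theorem Nat.cast_add_half_lt_cast_iff {i a : ℕ} : (i : ℝ) + 1 / 2 < a ↔ i < a := by
  constructor
  · intro h; exact_mod_cast (by linarith : (i : ℝ) < a)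
  · intro h; have : (i : ℝ) + 1 ≤ a := by exact_mod_cast h
    linarith

theorem Nat.cast_lt_cast_add_half_iff {i a : ℕ} : (a : ℝ) < i + 1 / 2 ↔ a ≤ i := by
  constructor
  · intro h; exact Nat.lt_add_one_iff.1 (by exact_mod_cast (by linarith : (a : ℝ) < i + 1))
  · intro h; have : (a : ℝ) ≤ i := by exact_mod_cast h
    linarith

def paraboloidLift (ab : ℕ × ℕ) : ℝ × ℝ × ℝ := (ab.1, ab.2, (ab.1 : ℝ) ^ 2 + (ab.2 : ℝ) ^ 2)

theorem paraboloidLift_injective : Function.Injective paraboloidLift := fun x y h => by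
  simp only [paraboloidLift, Prod.mk.injEq, Nat.cast_inj] at h
  exact Prod.ext h.1 h.2.1

theorem liftedGrid_eq_image (m : ℕ) :
    liftedGrid m = (Icc 1 m ×ˢ Icc 1 m).image paraboloidLift := rfl

theorem card_liftedGrid (m : ℕ) : #(liftedGrid m) = m ^ 2 := by
  rw [liftedGrid_eq_image, card_image_of_injective _ paraboloidLift_injective, card_product,
    Nat.card_Icc, Nat.add_sub_cancel, sq]

/-- The plane `x = i + 1/2` when `b = true`, and `y = i + 1/2` when `b = false`. -/
def AxisPlaneSeparates (pl : Bool × ℕ) (Q : Finset (ℝ × ℝ × ℝ)) : Prop :=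
  PlaneSeparates (if pl.1 then 1 else 0) (if pl.1 then 0 else 1) 0 (-((pl.2 : ℝ) + 1 / 2)) Q

def axisPlanes (m : ℕ) : Finset (Bool × ℕ) := univ ×ˢ range m

theorem card_axisPlanes (m : ℕ) : #(axisPlanes m) = 2 * m := by
  simp [axisPlanes]

theorem axisPlanes_nonempty {m : ℕ} (hm : m ≠ 0) : (axisPlanes m).Nonempty := by
  simp [axisPlanes, hm]

def gridCoord : Bool → ℕ × ℕ → ℕ
  | true => Prod.fst
  | false => Prod.snd

theorem axisPlaneSeparates_image_paraboloidLift_iff (b : Bool) (i : ℕ) (S : Finset (ℕ × ℕ)) :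
    AxisPlaneSeparates (b, i) (S.image paraboloidLift) ↔
      (∃ a ∈ S, i < gridCoord b a) ∧ ∃ a ∈ S, gridCoord b a ≤ i := by
  have hform : ∀ ab : ℕ × ℕ, (if b then 1 else 0) * (paraboloidLift ab).1 +
      (if b then 0 else 1) * (paraboloidLift ab).2.1 + 0 * (paraboloidLift ab).2.2 +
      -((i : ℝ) + 1 / 2) = gridCoord b ab - ((i : ℝ) + 1 / 2) := by
    intro ab; cases b <;> simp [paraboloidLift, gridCoord] <;> ring
  simp only [AxisPlaneSeparates, PlaneSeparates, exists_mem_image, hform, sub_pos, sub_neg,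
    Nat.cast_add_half_lt_cast_iff, Nat.cast_lt_cast_add_half_iff]

open scoped Classical

theorem card_image_fst_add_card_image_snd_sub_two_le {m : ℕ} {S : Finset (ℕ × ℕ)}
    (hS : S ⊆ Icc 1 m ×ˢ Icc 1 m) :
    #(S.image Prod.fst) + #(S.image Prod.snd) - 2 ≤
      #{pl ∈ axisPlanes m | AxisPlaneSeparates pl (S.image paraboloidLift)} := by
  have hcoord (b : Bool) : #(S.image (gridCoord b)) - 1 ≤
      #{i ∈ range m | AxisPlaneSeparates (b, i) (S.image paraboloidLift)} := by
    simp_rw [axisPlaneSeparates_image_paraboloidLift_iff]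
    refine card_image_sub_one_le_card_filter_straddle S _ fun a ha => ?_
    have := mem_product.1 (hS ha)
    cases b <;> simp only [gridCoord, (mem_Icc.1 this.1).2, (mem_Icc.1 this.2).2]
  have hfst : #(S.image Prod.fst) - 1 ≤ _ := hcoord true
  have hsnd : #(S.image Prod.snd) - 1 ≤ _ := hcoord false
  have hsplit : #{pl ∈ axisPlanes m | AxisPlaneSeparates pl (S.image paraboloidLift)} =
      #{i ∈ range m | AxisPlaneSeparates (true, i) (S.image paraboloidLift)} +
        #{i ∈ range m | AxisPlaneSeparates (false, i) (S.image paraboloidLift)} := by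
    simp only [axisPlanes, card_filter, sum_product, Fintype.sum_bool]
  omega

theorem two_thirds_sqrt_le_add_sub_two {x y k : ℕ} (hk : 2 ≤ k) (hxy : k ≤ x * y) :
    2 / 3 * √(k : ℝ) ≤ ((x + y - 2 : ℕ) : ℝ) := by
  have h3 : 3 ≤ x + y := by
    by_contra! h
    have hx : x ≤ 2 := by omega
    have hy : y ≤ 2 := by omega
    interval_cases x <;> interval_cases y <;> omega
  have hxyR : (k : ℝ) ≤ x * y := by exact_mod_cast hxy
  have h3R : (3 : ℝ) ≤ x + y := by exact_mod_cast h3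
  have hsqrt : √(k : ℝ) ≤ 3 / 2 * ((x : ℝ) + y - 2) :=
    Real.sqrt_le_iff.2 ⟨by linarith, by nlinarith [sq_nonneg ((x : ℝ) - y)]⟩
  rw [Nat.cast_sub (by omega), Nat.cast_add, Nat.cast_ofNat]
  linarith

theorem two_thirds_sqrt_le_card_filter_axisPlanes {m k : ℕ} (hk : 2 ≤ k)
    {R : Finset (ℝ × ℝ × ℝ)} (hR : R ⊆ liftedGrid m) (hkR : k ≤ #R) :
    2 / 3 * √(k : ℝ) ≤ #{pl ∈ axisPlanes m | AxisPlaneSeparates pl R} := by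
  obtain ⟨S, hS, rfl⟩ := subset_image_iff.1 (liftedGrid_eq_image m ▸ hR)
  have hcard : k ≤ #(S.image Prod.fst) * #(S.image Prod.snd) :=
    calc k ≤ #(S.image paraboloidLift) := hkR
      _ = #S := card_image_of_injective _ paraboloidLift_injective
      _ ≤ #(S.image Prod.fst ×ˢ S.image Prod.snd) := card_le_card subset_product
      _ = _ := card_product _ _
  exact (two_thirds_sqrt_le_add_sub_two hk hcard).trans
    (by exact_mod_cast card_image_fst_add_card_image_snd_sub_two_le hS)

theorem one_sixth_sqrt_sq_div_le {m k u C : ℝ} (hm : 0 < m) (hk : 0 < k)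
    (hu : m ^ 2 ≤ u * (2 * k)) (hC : u * (2 / 3 * √k) ≤ 2 * m * C) :
    1 / 6 * √(m ^ 2 / k) ≤ C := by
  have hs : 0 < √k := Real.sqrt_pos.2 hk
  rw [← Real.sq_sqrt hk.le] at hu
  have hmC : m ^ 2 ≤ m * (6 * √k * C) := by nlinarith [mul_le_mul_of_nonneg_left hC hs.le]
  rw [Real.sqrt_div' _ hk.le, Real.sqrt_sq hm.le, ← le_div_iff₀' (by norm_num), div_le_iff₀ hs]
  nlinarith

/-- For the lifted grid of `n = m²` points, any partition into parts of sizes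
between `k` and `2k` admits a plane separating at least `c·√(n/k)` parts. -/
theorem lifted_grid_counterexample :
    ∃ c : ℝ, 0 < c ∧
      ∀ m : ℕ, 2 ≤ m →
        ∀ k : ℕ, 2 ≤ k → k ≤ m ^ 2 →
          ∀ (u : ℕ) (Q : Fin u → Finset (ℝ × ℝ × ℝ)),
            (∀ i, (Q i).Nonempty) →
            (∀ i j, i ≠ j → Disjoint (Q i) (Q j)) →
            (∀ p : ℝ × ℝ × ℝ, p ∈ liftedGrid m ↔ ∃ i, p ∈ Q i) →
            (∀ i, k ≤ (Q i).card ∧ (Q i).card ≤ 2 * k) →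
            ∃ a b c' d : ℝ, (a, b, c') ≠ (0, 0, 0) ∧
              c * Real.sqrt (((m : ℝ) ^ 2) / (k : ℝ)) ≤
                (({i : Fin u | PlaneSeparates a b c' d (Q i)}).ncard : ℝ) := by
  refine ⟨1 / 6, by norm_num, fun m hm k hk _ u Q _ _ hcover hsize => ?_⟩
  set r : Fin u → Bool × ℕ → Prop := fun j pl => AxisPlaneSeparates pl (Q j)
  obtain ⟨pl, -, hpl⟩ := exists_card_mul_le_card_mul_card_bipartiteBelow r
    (axisPlanes_nonempty (by omega)) (s := univ) fun j _ =>
      two_thirds_sqrt_le_card_filter_axisPlanes hk (fun p hp => (hcover p).2 ⟨j, hp⟩) (hsize j).1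
  have hu : m ^ 2 ≤ u * (2 * k) := by
    rw [← card_liftedGrid]
    calc #(liftedGrid m) ≤ #(univ.biUnion Q) :=
          card_le_card fun p hp => by simpa using (hcover p).1 hp
      _ ≤ _ := by simpa using card_biUnion_le_card_mul univ Q _ fun j _ => (hsize j).2
  refine ⟨if pl.1 then 1 else 0, if pl.1 then 0 else 1, 0, -((pl.2 : ℝ) + 1 / 2),
    by cases pl.1 <;> simp, ?_⟩
  have hC : {j | AxisPlaneSeparates pl (Q j)}.ncard = #(univ.bipartiteBelow r pl) := by
    rw [← Set.ncard_coe_finset]; simp [r, bipartiteBelow]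
  change _ ≤ (({j | AxisPlaneSeparates pl (Q j)}.ncard : ℕ) : ℝ)
  rw [card_univ, Fintype.card_fin, card_axisPlanes, Nat.cast_mul, Nat.cast_ofNat] at hpl
  rw [hC]
  exact one_sixth_sqrt_sq_div_le (by positivity) (by positivity) (by exact_mod_cast hu) hpl
end
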